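/- arXiv:1701.07339 — 2 statements merged into one kernel-verified Lean document; each statement's English description precedes it below -/
import Mathlib

section
/- Let a, b > 0, set α² = a² + 3b², β² = 2a², l = 2ab²/(a² + 3b²), and k = 2a²(a⁴ + 7a²b² + 10b⁴)/((a² + b²)(a² + 3b²)). Consider the triangle in ℝ² with vertices A' = (0, a − l), B' = (−b, −l), C' = (b, −l). Then a point P = (x, y) satisfies W(P) = k if and only if x²/α² + y²/β² = 1; that is, the ellipse x²/(a² + 3b²) + y²/(2a²) = 1 is exactly the locus S_k(Δ A'B'C') of points with constant sum k of squared distances from the sides of this triangle. -/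
noncomputable section

/-- The point `(x, y)` of the Euclidean plane `ℝ²`. -/
def pt (x y : ℝ) : EuclideanSpace ℝ (Fin 2) :=
  (WithLp.equiv 2 (Fin 2 → ℝ)).symm ![x, y]

/-- The line through `X` and `Y`, i.e. the affine span of `{X, Y}`, as a set. -/
def lineThrough (X Y : EuclideanSpace ℝ (Fin 2)) : Set (EuclideanSpace ℝ (Fin 2)) :=
  (affineSpan ℝ {X, Y} : AffineSubspace ℝ (EuclideanSpace ℝ (Fin 2)))

/-- The distance sum function of the triangle `ABC`:
`V(P) = dist(P, line BC) + dist(P, line CA) + dist(P, line AB)`. -/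
def vSum (A B C P : EuclideanSpace ℝ (Fin 2)) : ℝ :=
  Metric.infDist P (lineThrough B C) + Metric.infDist P (lineThrough C A) +
    Metric.infDist P (lineThrough A B)

/-- The squared-distance sum function of the triangle `ABC`:
`W(P) = dist(P, line BC)² + dist(P, line CA)² + dist(P, line AB)²`. -/
def wSum (A B C P : EuclideanSpace ℝ (Fin 2)) : ℝ :=
  Metric.infDist P (lineThrough B C) ^ 2 + Metric.infDist P (lineThrough C A) ^ 2 +
    Metric.infDist P (lineThrough A B) ^ 2

/-!
The distance from `(p, q)` to the line through `(x₁, y₁)` and `(x₂, y₂)` is the absolute value of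
the cross product `(p - x₁, q - y₁) × (x₂ - x₁, y₂ - y₁)` divided by the length of the direction
vector, so `W` is a quadratic polynomial in the coordinates. For the isosceles triangle with base
at height `-l` the mixed term vanishes by symmetry, and the choice of `l` kills the linear term in
`y`; the constant `k` then makes `W - k` a positive multiple of `x²/α² + y²/β² - 1`.
-/

lemma pt_eta (P : EuclideanSpace ℝ (Fin 2)) : pt (P 0) (P 1) = P := by
  ext i; fin_cases i <;> rfl

lemma dist_pt_pt_sq (p q r s : ℝ) : dist (pt p q) (pt r s) ^ 2 = (p - r) ^ 2 + (q - s) ^ 2 := by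
  simp [EuclideanSpace.dist_eq, Fin.sum_univ_two, pt, Real.dist_eq, sq_abs,
    Real.sq_sqrt (by positivity : (0:ℝ) ≤ (p - r) ^ 2 + (q - s) ^ 2)]

lemma lineMap_pt (x₁ y₁ x₂ y₂ t : ℝ) :
    AffineMap.lineMap (pt x₁ y₁) (pt x₂ y₂) t = pt (x₁ + t * (x₂ - x₁)) (y₁ + t * (y₂ - y₁)) := by
  ext i; fin_cases i <;> simp [AffineMap.lineMap_apply, pt] <;> ring

lemma lineThrough_eq_range (X Y : EuclideanSpace ℝ (Fin 2)) :
    lineThrough X Y = Set.range (AffineMap.lineMap X Y : ℝ → _) := by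
  ext Q
  exact mem_affineSpan_pair_iff_exists_lineMap_eq

/-- Lagrange's identity `|u|²|d|² = (u × d)² + (u · d)²`, where `u × d` does not depend on `t`. -/
lemma dist_pt_lineMap_sq_mul (x₁ y₁ x₂ y₂ p q t : ℝ) :
    dist (pt p q) (AffineMap.lineMap (pt x₁ y₁) (pt x₂ y₂) t) ^ 2
        * ((x₂ - x₁) ^ 2 + (y₂ - y₁) ^ 2)
      = ((p - x₁) * (y₂ - y₁) - (q - y₁) * (x₂ - x₁)) ^ 2
        + ((p - x₁) * (x₂ - x₁) + (q - y₁) * (y₂ - y₁)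
            - t * ((x₂ - x₁) ^ 2 + (y₂ - y₁) ^ 2)) ^ 2 := by
  rw [lineMap_pt, dist_pt_pt_sq]; ring

lemma infDist_pt_lineThrough_sq {x₁ y₁ x₂ y₂ : ℝ} (h : 0 < (x₂ - x₁) ^ 2 + (y₂ - y₁) ^ 2)
    (p q : ℝ) :
    Metric.infDist (pt p q) (lineThrough (pt x₁ y₁) (pt x₂ y₂)) ^ 2
      = ((p - x₁) * (y₂ - y₁) - (q - y₁) * (x₂ - x₁)) ^ 2
        / ((x₂ - x₁) ^ 2 + (y₂ - y₁) ^ 2) := by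
  set D := (x₂ - x₁) ^ 2 + (y₂ - y₁) ^ 2
  set c := (p - x₁) * (y₂ - y₁) - (q - y₁) * (x₂ - x₁)
  set e := (p - x₁) * (x₂ - x₁) + (q - y₁) * (y₂ - y₁)
  have hdist (t : ℝ) : dist (pt p q) (AffineMap.lineMap (pt x₁ y₁) (pt x₂ y₂) t) ^ 2
      = (c ^ 2 + (e - t * D) ^ 2) / D := by
    rw [eq_div_iff h.ne']; exact dist_pt_lineMap_sq_mul x₁ y₁ x₂ y₂ p q t
  suffices Metric.infDist (pt p q) (lineThrough (pt x₁ y₁) (pt x₂ y₂)) = √(c ^ 2 / D) by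
    rw [this, Real.sq_sqrt (by positivity)]
  rw [lineThrough_eq_range]
  apply le_antisymm
  · refine (Metric.infDist_le_dist_of_mem (Set.mem_range_self (e / D))).trans_eq ?_
    rw [← Real.sqrt_sq dist_nonneg, hdist, div_mul_cancel₀ _ h.ne', sub_self]
    norm_num
  · rw [Metric.le_infDist (Set.range_nonempty _), Set.forall_mem_range]
    intro t
    rw [← Real.sqrt_sq (dist_nonneg (y := AffineMap.lineMap _ _ t)), hdist]
    gcongr
    exact le_add_of_nonneg_right (sq_nonneg _)

lemma wSum_isosceles {b : ℝ} (hb : b ≠ 0) (t s p q : ℝ) :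
    wSum (pt 0 t) (pt (-b) s) (pt b s) (pt p q)
      = (q - s) ^ 2
        + (((t - s) * (p - b) + b * (q - s)) ^ 2 + ((t - s) * p - b * (q - t)) ^ 2)
          / ((t - s) ^ 2 + b ^ 2) := by
  have hBC : (b - -b) ^ 2 + (s - s) ^ 2 = 4 * b ^ 2 := by ring
  have hCA : (0 - b) ^ 2 + (t - s) ^ 2 = (t - s) ^ 2 + b ^ 2 := by ring
  have hAB : (-b - 0) ^ 2 + (s - t) ^ 2 = (t - s) ^ 2 + b ^ 2 := by ring
  have hD : 0 < (t - s) ^ 2 + b ^ 2 := by positivity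
  rw [wSum, infDist_pt_lineThrough_sq (hBC ▸ by positivity), infDist_pt_lineThrough_sq (hCA ▸ hD),
    infDist_pt_lineThrough_sq (hAB ▸ hD), hBC, hCA, hAB]
  field_simp
  ring

/-- **Theorem 3(b).** With `l = 2ab²/(a²+3b²)` and
`k = 2a²(a⁴+7a²b²+10b⁴)/((a²+b²)(a²+3b²))`, the locus of points with sum of squared
distances `k` from the sides of the triangle `A'(0, a−l)`, `B'(−b, −l)`, `C'(b, −l)` is
exactly the ellipse `x²/(a²+3b²) + y²/(2a²) = 1`. -/
theorem stmt_13 (a b : ℝ) (ha : 0 < a) (hb : 0 < b) :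
    ∀ P : EuclideanSpace ℝ (Fin 2),
      wSum (pt 0 (a - 2 * a * b ^ 2 / (a ^ 2 + 3 * b ^ 2)))
          (pt (-b) (-(2 * a * b ^ 2 / (a ^ 2 + 3 * b ^ 2))))
          (pt b (-(2 * a * b ^ 2 / (a ^ 2 + 3 * b ^ 2)))) P
        = 2 * a ^ 2 * (a ^ 4 + 7 * a ^ 2 * b ^ 2 + 10 * b ^ 4)
            / ((a ^ 2 + b ^ 2) * (a ^ 2 + 3 * b ^ 2)) ↔
      (P 0) ^ 2 / (a ^ 2 + 3 * b ^ 2) + (P 1) ^ 2 / (2 * a ^ 2) = 1 := by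
  intro P
  nth_rewrite 1 [← pt_eta P]
  rw [wSum_isosceles hb.ne', ← sub_eq_zero, ← sub_eq_zero (b := (1 : ℝ))]
  have hC : 2 * a ^ 2 * (a ^ 2 + 3 * b ^ 2) / (a ^ 2 + b ^ 2) ≠ 0 := by positivity
  -- `W - k = 2a²(a² + 3b²)/(a² + b²) * (x²/α² + y²/β² - 1)`
  convert mul_eq_zero_iff_left hC using 2
  field_simp
  ring
end
end

section
/- For every α ≥ β > 0 there exist three affinely independent points A, B, C in ℝ² and a real constant k > 0 such that the set of points P = (x, y) with W(P) = k (the sum of squared distances from P to the three side lines of triangle ABC) is exactly the ellipse {(x, y) : x²/α² + y²/β² = 1}. -/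
noncomputable section

/-! In coordinates the distance from `P` to the line `a x + b y = c`, with `a² + b² = 1`, is
`|a P₀ + b P₁ - c|`, so `W` is a quadratic polynomial in `P`. For the isosceles triangle with
side lines `c x + q y = 1`, `c x - q y = -1` and `y = -2q`, where `c² + q² = 1`, the linear and
mixed terms cancel and `W(x, y) = 2c² x² + (2q² + 1) y² + 2 + 4q²`. The level sets of `W` are
therefore centred ellipses with axes along the coordinate axes, and `c`, `q` can be tuned so that
the coefficients are proportional to `1/α²` and `1/β²` exactly when `2α² > β²`. -/

@[simp] lemma pt_apply_zero (x y : ℝ) : pt x y 0 = x := rfl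

@[simp] lemma pt_apply_one (x y : ℝ) : pt x y 1 = y := rfl

lemma dist_sq_eq_coords (P Q : EuclideanSpace ℝ (Fin 2)) :
    dist P Q ^ 2 = (P 0 - Q 0) ^ 2 + (P 1 - Q 1) ^ 2 := by
  simp [EuclideanSpace.dist_sq_eq, Fin.sum_univ_two, Real.dist_eq, sq_abs]

lemma lineThrough_eq_setOf {a b c : ℝ} (hab : a ^ 2 + b ^ 2 ≠ 0)
    {X Y : EuclideanSpace ℝ (Fin 2)} (hXY : X ≠ Y)
    (hX : a * X 0 + b * X 1 = c) (hY : a * Y 0 + b * Y 1 = c) :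
    lineThrough X Y = {Q | a * Q 0 + b * Q 1 = c} := by
  have horth : a * (Y 0 - X 0) + b * (Y 1 - X 1) = 0 := by linear_combination hY - hX
  -- `Y - X` is a nonzero vector orthogonal to `(a, b)`, so it is not parallel to `(a, b)`
  have hcross : a * (Y 1 - X 1) - b * (Y 0 - X 0) ≠ 0 := by
    intro h
    have h0 : (a ^ 2 + b ^ 2) * (Y 0 - X 0) = 0 := by linear_combination a * horth - b * h
    have h1 : (a ^ 2 + b ^ 2) * (Y 1 - X 1) = 0 := by linear_combination b * horth + a * h
    refine hXY ?_
    ext i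
    fin_cases i
    · show X 0 = Y 0
      linarith [(mul_eq_zero.1 h0).resolve_left hab]
    · show X 1 = Y 1
      linarith [(mul_eq_zero.1 h1).resolve_left hab]
  ext Q
  have hmem : Q ∈ lineThrough X Y ↔ ∃ r : ℝ, r • (Y -ᵥ X) = Q -ᵥ X := by
    rw [lineThrough, SetLike.mem_coe, ← vadd_left_mem_affineSpan_pair, vsub_vadd]
  rw [hmem, Set.mem_ofPred_eq]
  constructor
  · rintro ⟨r, hr⟩
    have h0 : r * (Y 0 - X 0) = Q 0 - X 0 := congrArg (· 0) hr
    have h1 : r * (Y 1 - X 1) = Q 1 - X 1 := congrArg (· 1) hr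
    linear_combination hX + r * horth - a * h0 - b * h1
  · intro hQ
    refine ⟨(a * (Q 1 - X 1) - b * (Q 0 - X 0)) / (a * (Y 1 - X 1) - b * (Y 0 - X 0)), ?_⟩
    ext i
    fin_cases i
    · show _ * (Y 0 - X 0) = Q 0 - X 0
      rw [div_mul_eq_mul_div, div_eq_iff hcross]
      linear_combination (Q 1 - X 1) * horth - (Y 1 - X 1) * (hQ - hX)
    · show _ * (Y 1 - X 1) = Q 1 - X 1
      rw [div_mul_eq_mul_div, div_eq_iff hcross]
      linear_combination (Y 0 - X 0) * (hQ - hX) - (Q 0 - X 0) * horth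

lemma infDist_setOf_eq_abs {a b : ℝ} (hab : a ^ 2 + b ^ 2 = 1) (c : ℝ)
    (P : EuclideanSpace ℝ (Fin 2)) :
    Metric.infDist P {Q | a * Q 0 + b * Q 1 = c} = |a * P 0 + b * P 1 - c| := by
  set e := a * P 0 + b * P 1 - c with he
  have hfoot : pt (P 0 - e * a) (P 1 - e * b) ∈ {Q | a * Q 0 + b * Q 1 = c} := by
    show a * (P 0 - e * a) + b * (P 1 - e * b) = c
    linear_combination he - e * hab
  have hfoot_dist : dist P (pt (P 0 - e * a) (P 1 - e * b)) = |e| := by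
    rw [← sq_eq_sq₀ dist_nonneg (abs_nonneg e), dist_sq_eq_coords, sq_abs]
    simp only [pt_apply_zero, pt_apply_one]
    linear_combination e ^ 2 * hab
  have hle_dist : ∀ Q ∈ {Q | a * Q 0 + b * Q 1 = c}, |e| ≤ dist P Q := by
    intro Q (hQ : a * Q 0 + b * Q 1 = c)
    refine abs_le_of_sq_le_sq ?_ dist_nonneg
    rw [dist_sq_eq_coords]
    have hdot : e = a * (P 0 - Q 0) + b * (P 1 - Q 1) := by linear_combination he + hQ
    -- Lagrange's identity `(u ⬝ v)² + (u × v)² = ‖u‖² ‖v‖²` with `u = (a, b)` a unit vector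
    have hlagrange : e ^ 2 + (a * (P 1 - Q 1) - b * (P 0 - Q 0)) ^ 2
        = (P 0 - Q 0) ^ 2 + (P 1 - Q 1) ^ 2 := by
      rw [hdot]
      linear_combination ((P 0 - Q 0) ^ 2 + (P 1 - Q 1) ^ 2) * hab
    linarith [sq_nonneg (a * (P 1 - Q 1) - b * (P 0 - Q 0))]
  exact le_antisymm ((Metric.infDist_le_dist_of_mem hfoot).trans_eq hfoot_dist)
    ((Metric.le_infDist ⟨_, hfoot⟩).2 hle_dist)

-- the triangle cut out by the lines `c x + q y = 1`, `c x - q y = -1` and `y = -2 q`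
def isoTriangle (c q : ℝ) : Fin 3 → EuclideanSpace ℝ (Fin 2) :=
  ![pt (-((1 + 2 * q ^ 2) / c)) (-(2 * q)), pt ((1 + 2 * q ^ 2) / c) (-(2 * q)), pt 0 (1 / q)]

section isoTriangle

variable {c q : ℝ}

lemma isoTriangle_injective (hc : c ≠ 0) : Function.Injective (isoTriangle c q) := by
  have hx : (1 + 2 * q ^ 2) / c ≠ 0 := div_ne_zero (by positivity) hc
  intro i j hij
  have h0 : isoTriangle c q i 0 = isoTriangle c q j 0 := by rw [hij]
  fin_cases i <;> fin_cases j <;> simp [isoTriangle] at h0 ⊢ <;> grind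

lemma lineThrough_isoTriangle_01 (hc : c ≠ 0) :
    lineThrough (isoTriangle c q 0) (isoTriangle c q 1) = {Q | 0 * Q 0 + 1 * Q 1 = -(2 * q)} :=
  lineThrough_eq_setOf (by norm_num) ((isoTriangle_injective hc).ne (by decide))
    (by simp [isoTriangle]) (by simp [isoTriangle])

lemma lineThrough_isoTriangle_12 (hc : c ≠ 0) (hq : q ≠ 0) :
    lineThrough (isoTriangle c q 1) (isoTriangle c q 2) = {Q | c * Q 0 + q * Q 1 = 1} :=
  lineThrough_eq_setOf (by positivity) ((isoTriangle_injective hc).ne (by decide))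
    (by simp [isoTriangle]; field_simp; ring) (by simp [isoTriangle]; field_simp)

lemma lineThrough_isoTriangle_20 (hc : c ≠ 0) (hq : q ≠ 0) :
    lineThrough (isoTriangle c q 2) (isoTriangle c q 0) = {Q | c * Q 0 + -q * Q 1 = -1} :=
  lineThrough_eq_setOf (by positivity) ((isoTriangle_injective hc).ne (by decide))
    (by simp [isoTriangle]; field_simp) (by simp [isoTriangle]; field_simp; ring)

lemma wSum_isoTriangle (hc : c ≠ 0) (hq : q ≠ 0) (hcq : c ^ 2 + q ^ 2 = 1)
    (P : EuclideanSpace ℝ (Fin 2)) :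
    wSum (isoTriangle c q 0) (isoTriangle c q 1) (isoTriangle c q 2) P
      = 2 * c ^ 2 * P 0 ^ 2 + (2 * q ^ 2 + 1) * P 1 ^ 2 + (2 + 4 * q ^ 2) := by
  rw [wSum, lineThrough_isoTriangle_12 hc hq, lineThrough_isoTriangle_20 hc hq,
    lineThrough_isoTriangle_01 hc, infDist_setOf_eq_abs hcq,
    infDist_setOf_eq_abs (by rw [neg_sq, hcq]), infDist_setOf_eq_abs (by norm_num)]
  simp only [sq_abs]
  ring

lemma affineIndependent_isoTriangle (hc : c ≠ 0) (hq : q ≠ 0) :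
    AffineIndependent ℝ (isoTriangle c q) := by
  change AffineIndependent ℝ ![isoTriangle c q 0, isoTriangle c q 1, isoTriangle c q 2]
  rw [affineIndependent_iff_not_collinear_set]
  intro hcol
  have hmem : isoTriangle c q 2 ∈ lineThrough (isoTriangle c q 0) (isoTriangle c q 1) :=
    hcol.mem_affineSpan_of_mem_of_ne (by simp) (by simp) (by simp)
      ((isoTriangle_injective hc).ne (by decide))
  rw [lineThrough_isoTriangle_01 hc] at hmem
  have hC : 1 / q = -(2 * q) := by simpa [isoTriangle] using hmem
  field_simp at hC
  nlinarith [sq_nonneg q]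

end isoTriangle

lemma exists_isoTriangle_params {α β : ℝ} (hβ : 0 < β) (hαβ : β ≤ α) :
    ∃ c q L : ℝ, c ≠ 0 ∧ q ≠ 0 ∧ c ^ 2 + q ^ 2 = 1 ∧ 0 < L ∧
      2 * c ^ 2 = L / α ^ 2 ∧ 2 * q ^ 2 + 1 = L / β ^ 2 := by
  have hα : 0 < α := hβ.trans_le hαβ
  -- `L` is forced by `L / α² + L / β² = 3`; then `q² > 0` amounts to `2 α² > β²`
  set L := 3 * α ^ 2 * β ^ 2 / (α ^ 2 + β ^ 2) with hL
  have hq2 : 0 < (L / β ^ 2 - 1) / 2 := by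
    rw [hL]
    field_simp
    nlinarith
  refine ⟨√(L / α ^ 2 / 2), √((L / β ^ 2 - 1) / 2), L, (Real.sqrt_pos.2 (by positivity)).ne',
    (Real.sqrt_pos.2 hq2).ne', ?_, by positivity, ?_, ?_⟩
  · rw [Real.sq_sqrt (by positivity), Real.sq_sqrt hq2.le, hL]
    field_simp
    ring
  · rw [Real.sq_sqrt (by positivity)]
    ring
  · rw [Real.sq_sqrt hq2.le]
    ring

/-- Every canonical ellipse `x²/α² + y²/β² = 1` (with `α ≥ β > 0`) is the locus of points
with some constant sum `k` of squared distances from the side lines of a suitable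
triangle. -/
theorem stmt_14 (α β : ℝ) (hβ : 0 < β) (hαβ : β ≤ α) :
    ∃ A B C : EuclideanSpace ℝ (Fin 2), AffineIndependent ℝ ![A, B, C] ∧
      ∃ k : ℝ, 0 < k ∧ ∀ P : EuclideanSpace ℝ (Fin 2),
        wSum A B C P = k ↔ (P 0) ^ 2 / α ^ 2 + (P 1) ^ 2 / β ^ 2 = 1 := by
  obtain ⟨c, q, L, hc, hq, hcq, hL, hcα, hqβ⟩ := exists_isoTriangle_params hβ hαβ
  refine ⟨isoTriangle c q 0, isoTriangle c q 1, isoTriangle c q 2,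
    affineIndependent_isoTriangle hc hq, L + (2 + 4 * q ^ 2), by positivity, fun P => ?_⟩
  have hW : wSum (isoTriangle c q 0) (isoTriangle c q 1) (isoTriangle c q 2) P
      = L * (P 0 ^ 2 / α ^ 2 + P 1 ^ 2 / β ^ 2) + (2 + 4 * q ^ 2) := by
    rw [wSum_isoTriangle hc hq hcq, hcα, hqβ]
    ring
  rw [hW, add_left_inj, mul_eq_left₀ hL.ne']
end
end
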